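/- arXiv:2602.00345 — 4 statements merged into one kernel-verified Lean document; each statement's English description precedes it below -/
import Mathlib

section
/- The functions u±(y) = 1 − α± y²/(y² + β±), with α± = 2 ± 2√((d−4)/(3(d−2))) and β± = (2/3)(d−4) ± (1/3)√(3(d−2)(d−4)), satisfy the ODE y²(1−y²)u'' + ((d−3)y − 2y³)u' + (d−2)u(1−u²) = 0 for all real y where y² + β± ≠ 0, for any real d ≥ 5 (for u₊) and d ≥ 11 (for u₋). -/
noncomputable def alphaP (d : ℝ) : ℝ := 2 + 2 * Real.sqrt ((d - 4) / (3 * (d - 2)))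
noncomputable def alphaM (d : ℝ) : ℝ := 2 - 2 * Real.sqrt ((d - 4) / (3 * (d - 2)))
noncomputable def betaP (d : ℝ) : ℝ := 2 / 3 * (d - 4) + 1 / 3 * Real.sqrt (3 * (d - 2) * (d - 4))
noncomputable def betaM (d : ℝ) : ℝ := 2 / 3 * (d - 4) - 1 / 3 * Real.sqrt (3 * (d - 2) * (d - 4))
noncomputable def uPlus (d y : ℝ) : ℝ := 1 - alphaP d * y ^ 2 / (y ^ 2 + betaP d)
noncomputable def uMinus (d y : ℝ) : ℝ := 1 - alphaM d * y ^ 2 / (y ^ 2 + betaM d)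

/-!
Substituting the ansatz `u = 1 - a y² / (y² + b)` into the equation and clearing the denominator
`(y² + b)³` leaves a polynomial in `y` whose coefficients vanish when
`2b = (d-2)(a-1)(a-2)` and `6b = 3a(d-2) - 2(d+2)`. Eliminating `b`, `a = 2 + 2t` with
`3(d-2)t² = d-4`; the two roots `t = ±√((d-4)/(3(d-2)))` give `(α±, β±)`. Since `β₊ > 0` for
`d > 4` and `β₋ > 0` for `d > 10`, `u±` is smooth on all of `ℝ`, so `deriv` is the true derivative.
-/

section Ansatz

variable {a b x : ℝ}

theorem hasDerivAt_one_sub_mul_sq_div (hx : x ^ 2 + b ≠ 0) :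
    HasDerivAt (fun y : ℝ => 1 - a * y ^ 2 / (y ^ 2 + b))
      (-2 * a * b * x / (x ^ 2 + b) ^ 2) x := by
  have hnum : HasDerivAt (fun y : ℝ => a * y ^ 2) (a * (2 * x)) x := by
    simpa using (hasDerivAt_pow 2 x).const_mul a
  have hden : HasDerivAt (fun y : ℝ => y ^ 2 + b) (2 * x) x := by
    simpa using (hasDerivAt_pow 2 x).add_const b
  refine ((hnum.div hden hx).const_sub 1).congr_deriv ?_
  field_simp
  ring

theorem hasDerivAt_mul_div_sq_add_sq (hx : x ^ 2 + b ≠ 0) :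
    HasDerivAt (fun y : ℝ => -2 * a * b * y / (y ^ 2 + b) ^ 2)
      (-2 * a * b * (b - 3 * x ^ 2) / (x ^ 2 + b) ^ 3) x := by
  have hnum : HasDerivAt (fun y : ℝ => -2 * a * b * y) (-2 * a * b) x := by
    simpa using (hasDerivAt_id x).const_mul (-2 * a * b)
  have hden : HasDerivAt (fun y : ℝ => (y ^ 2 + b) ^ 2) (2 * (x ^ 2 + b) * (2 * x)) x := by
    simpa [Pi.pow_def] using ((hasDerivAt_pow 2 x).add_const b).pow 2
  refine (hnum.div hden (pow_ne_zero 2 hx)).congr_deriv ?_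
  field_simp
  ring

theorem ym_ode_of_ansatz_relations {d : ℝ} (hb : 0 < b)
    (h₁ : 2 * b = (d - 2) * (a - 1) * (a - 2))
    (h₂ : 6 * b = 3 * a * (d - 2) - 2 * (d + 2)) (y : ℝ) :
    y ^ 2 * (1 - y ^ 2) * deriv (deriv (fun y : ℝ => 1 - a * y ^ 2 / (y ^ 2 + b))) y
      + ((d - 3) * y - 2 * y ^ 3) * deriv (fun y : ℝ => 1 - a * y ^ 2 / (y ^ 2 + b)) y
      + (d - 2) * (1 - a * y ^ 2 / (y ^ 2 + b)) * (1 - (1 - a * y ^ 2 / (y ^ 2 + b)) ^ 2)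
      = 0 := by
  have hpos : ∀ x : ℝ, x ^ 2 + b ≠ 0 := fun x => by positivity
  have hderiv : deriv (fun y : ℝ => 1 - a * y ^ 2 / (y ^ 2 + b))
      = fun x : ℝ => -2 * a * b * x / (x ^ 2 + b) ^ 2 :=
    funext fun x => (hasDerivAt_one_sub_mul_sq_div (hpos x)).deriv
  rw [hderiv, (hasDerivAt_mul_div_sq_add_sq (hpos y)).deriv]
  have := hpos y
  field_simp
  linear_combination (a * b * y ^ 4) * h₂ - (a * y ^ 6) * h₁

theorem ansatz_relations_of_sq {d t : ℝ} (ht : 3 * (d - 2) * t ^ 2 = d - 4)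
    (ha : a = 2 + 2 * t) (hb : b = 2 / 3 * (d - 4) + (d - 2) * t) :
    2 * b = (d - 2) * (a - 1) * (a - 2) ∧ 6 * b = 3 * a * (d - 2) - 2 * (d + 2) := by
  subst ha hb
  constructor
  · linear_combination (-4 / 3) * ht
  · ring

end Ansatz

section Parameters

variable {d : ℝ}

theorem sq_sqrt_ratio (hd : 4 ≤ d) :
    3 * (d - 2) * Real.sqrt ((d - 4) / (3 * (d - 2))) ^ 2 = d - 4 := by
  rw [Real.sq_sqrt (div_nonneg (by linarith) (by linarith))]
  field_simp [show d - 2 ≠ 0 by linarith]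

theorem sqrt_mul_eq_mul_sqrt_div (hd : 2 < d) :
    Real.sqrt (3 * (d - 2) * (d - 4)) = 3 * (d - 2) * Real.sqrt ((d - 4) / (3 * (d - 2))) := by
  have hc : 0 < 3 * (d - 2) := by linarith
  conv_lhs => rw [show 3 * (d - 2) * (d - 4) = (3 * (d - 2)) ^ 2 * ((d - 4) / (3 * (d - 2))) by
    field_simp]
  rw [Real.sqrt_mul (sq_nonneg _), Real.sqrt_sq hc.le]

theorem betaP_eq (hd : 2 < d) :
    betaP d = 2 / 3 * (d - 4) + (d - 2) * Real.sqrt ((d - 4) / (3 * (d - 2))) := by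
  rw [betaP, sqrt_mul_eq_mul_sqrt_div hd]
  ring

theorem betaM_eq (hd : 2 < d) :
    betaM d = 2 / 3 * (d - 4) + (d - 2) * -Real.sqrt ((d - 4) / (3 * (d - 2))) := by
  rw [betaM, sqrt_mul_eq_mul_sqrt_div hd]
  ring

theorem betaP_pos (hd : 4 < d) : 0 < betaP d := by
  rw [betaP_eq (by linarith)]
  have := Real.sqrt_nonneg ((d - 4) / (3 * (d - 2)))
  nlinarith

theorem betaM_pos (hd : 10 < d) : 0 < betaM d := by
  rw [betaM_eq (by linarith)]
  have hs := sq_sqrt_ratio (d := d) (by linarith)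
  have := Real.sqrt_nonneg ((d - 4) / (3 * (d - 2)))
  -- `(d-2)² s² = (d-2)(d-4)/3 < 4(d-4)²/9` exactly when `d > 10`
  nlinarith

theorem alphaP_betaP_relations (hd : 4 ≤ d) :
    2 * betaP d = (d - 2) * (alphaP d - 1) * (alphaP d - 2) ∧
      6 * betaP d = 3 * alphaP d * (d - 2) - 2 * (d + 2) :=
  ansatz_relations_of_sq (sq_sqrt_ratio hd) rfl (betaP_eq (by linarith))

theorem alphaM_betaM_relations (hd : 4 ≤ d) :
    2 * betaM d = (d - 2) * (alphaM d - 1) * (alphaM d - 2) ∧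
      6 * betaM d = 3 * alphaM d * (d - 2) - 2 * (d + 2) :=
  ansatz_relations_of_sq (by rw [neg_sq]; exact sq_sqrt_ratio hd)
    (by rw [alphaM]; ring) (betaM_eq (by linarith))

end Parameters

theorem stmt0 (d : ℝ) :
    (d ≥ 5 → ∀ y : ℝ, y ^ 2 + betaP d ≠ 0 →
      y ^ 2 * (1 - y ^ 2) * deriv (deriv (uPlus d)) y
        + ((d - 3) * y - 2 * y ^ 3) * deriv (uPlus d) y
        + (d - 2) * uPlus d y * (1 - (uPlus d y) ^ 2) = 0) ∧
    (d ≥ 11 → ∀ y : ℝ, y ^ 2 + betaM d ≠ 0 →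
      y ^ 2 * (1 - y ^ 2) * deriv (deriv (uMinus d)) y
        + ((d - 3) * y - 2 * y ^ 3) * deriv (uMinus d) y
        + (d - 2) * uMinus d y * (1 - (uMinus d y) ^ 2) = 0) := by
  constructor
  · intro hd y _
    obtain ⟨h₁, h₂⟩ := alphaP_betaP_relations (by linarith)
    exact ym_ode_of_ansatz_relations (betaP_pos (by linarith)) h₁ h₂ y
  · intro hd y _
    obtain ⟨h₁, h₂⟩ := alphaM_betaM_relations (by linarith)
    exact ym_ode_of_ansatz_relations (betaM_pos (by linarith)) h₁ h₂ y
end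

section
/- Let u : [0,1] → ℝ be a C² solution of y²(1−y²)u'' + ((d−3)y − 2y³)u' + (d−2)u(1−u²) = 0 on (0,1) with d > 4, and define H(y) = (1/2)y²(1−y²)u'(y)² − ((d−2)/4)(1−u(y)²)². Then H'(y) = −(d−4)y u'(y)² for all y ∈ (0,1). -/
/-! Multiplying the equation `p u'' + b u' + F'(u) = 0` by `u'` shows that the energy
`½ p u'² + F(u)` has derivative `(p'/2 - b) u'²`; for the Yang–Mills weight
`p = y²(1 - y²)` and potential `F(u) = -((d-2)/4)(1 - u²)²` this is `-(d-4) y u'²`. -/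

theorem HasDerivAt.energy {p F u u' u'' : ℝ → ℝ} {p' b f y : ℝ}
    (hp : HasDerivAt p p' y) (hF : HasDerivAt F f (u y))
    (hu : HasDerivAt u (u' y) y) (hu' : HasDerivAt u' (u'' y) y)
    (hode : p y * u'' y + b * u' y + f = 0) :
    HasDerivAt (fun y => 1 / 2 * p y * u' y ^ 2 + F (u y)) ((p' / 2 - b) * u' y ^ 2) y := by
  have hkin := (hp.const_mul (1 / 2 : ℝ)).fun_mul (hu'.fun_pow 2)
  have hpot := hF.comp y hu
  refine (hkin.fun_add hpot).congr_deriv ?_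
  norm_num
  linear_combination u' y * hode

theorem stmt2_general (d : ℝ) (u u' u'' : ℝ → ℝ)
    (hu : ∀ y ∈ Set.Ioo (0 : ℝ) 1, HasDerivAt u (u' y) y)
    (hu' : ∀ y ∈ Set.Ioo (0 : ℝ) 1, HasDerivAt u' (u'' y) y)
    (hode : ∀ y ∈ Set.Ioo (0 : ℝ) 1,
      y ^ 2 * (1 - y ^ 2) * u'' y + ((d - 3) * y - 2 * y ^ 3) * u' y
        + (d - 2) * u y * (1 - (u y) ^ 2) = 0) :
    ∀ y ∈ Set.Ioo (0 : ℝ) 1,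
      HasDerivAt (fun y => (1 / 2) * y ^ 2 * (1 - y ^ 2) * (u' y) ^ 2
          - ((d - 2) / 4) * (1 - (u y) ^ 2) ^ 2)
        (-(d - 4) * y * (u' y) ^ 2) y := by
  intro y hy
  have hweight : HasDerivAt (fun y : ℝ => y ^ 2 * (1 - y ^ 2)) (2 * y - 4 * y ^ 3) y := by
    refine ((hasDerivAt_pow 2 y).fun_mul ((hasDerivAt_const y 1).fun_sub
      (hasDerivAt_pow 2 y))).congr_deriv ?_
    norm_num
    ring
  have hpotential : HasDerivAt (fun s : ℝ => -((d - 2) / 4) * (1 - s ^ 2) ^ 2)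
      ((d - 2) * u y * (1 - u y ^ 2)) (u y) := by
    refine ((((hasDerivAt_const (u y) 1).fun_sub (hasDerivAt_pow 2 (u y))).fun_pow 2).const_mul
      _).congr_deriv ?_
    norm_num
    ring
  convert hweight.energy hpotential (hu y hy) (hu' y hy) (hode y hy) using 1
  · funext y
    ring
  · ring

theorem stmt2 (d : ℝ) (hd : d > 4) (u u' u'' : ℝ → ℝ)
    (hu : ∀ y ∈ Set.Ioo (0 : ℝ) 1, HasDerivAt u (u' y) y)
    (hu' : ∀ y ∈ Set.Ioo (0 : ℝ) 1, HasDerivAt u' (u'' y) y)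
    (hode : ∀ y ∈ Set.Ioo (0 : ℝ) 1,
      y ^ 2 * (1 - y ^ 2) * u'' y + ((d - 3) * y - 2 * y ^ 3) * u' y
        + (d - 2) * u y * (1 - (u y) ^ 2) = 0) :
    ∀ y ∈ Set.Ioo (0 : ℝ) 1,
      HasDerivAt (fun y => (1 / 2) * y ^ 2 * (1 - y ^ 2) * (u' y) ^ 2
          - ((d - 2) / 4) * (1 - (u y) ^ 2) ^ 2)
        (-(d - 4) * y * (u' y) ^ 2) y :=
  stmt2_general d u u' u'' hu hu' hode
end

section
/- Let d ≥ 10 and let u be a C³ solution of the self-similar Yang–Mills ODE on (0,1) with u(y) = 1 − a y² + O(y⁴) near y = 0 for some a > 0 (so that h(y) = y³u'(y) satisfies h(y) ~ −2ay⁴ near 0). Then u'(y) < 0 for all y ∈ (0,1). -/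
/-!
The function `h = y³ u'` solves `y²(1 - y²) h'' + (d - 7) y h' = (3(d - 2) u² + d - 10) h`, whose
coefficient on the right is nonnegative for `d ≥ 10`; by the asymptotics at `0`, `h` is negative
near `0` and tends to `0` there. If `h` had a first nonnegative point `y₁`, the right side would be
`≤ 0` on `(0, y₁)`, so `P h'` is antitone there for an integrating factor `P > 0`. Then a point
with `h' > 0` would force `h' > 0` on everything to its left, and `h` would increase from its limit
`0` to a negative value. Hence `h' ≤ 0` on `(0, y₁)`, and `h y₁ ≤ h (y₁ / 2) < 0`.
-/

open Filter Topology Set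

theorem yangMills_ode_deriv {d y : ℝ} {u u' u'' u''' : ℝ → ℝ}
    (hu : HasDerivAt u (u' y) y) (hu' : HasDerivAt u' (u'' y) y)
    (hu'' : HasDerivAt u'' (u''' y) y)
    (hode : ∀ᶠ z in 𝓝 y, z ^ 2 * (1 - z ^ 2) * u'' z + ((d - 3) * z - 2 * z ^ 3) * u' z
      + (d - 2) * u z * (1 - u z ^ 2) = 0) :
    y ^ 2 * (1 - y ^ 2) * u''' y + ((d - 1) * y - 6 * y ^ 3) * u'' y
      + (2 * d - 5 - 6 * y ^ 2 - 3 * (d - 2) * u y ^ 2) * u' y = 0 := by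
  have hz := hasDerivAt_id' y
  have hF := ((((hz.fun_pow 2).fun_mul ((hasDerivAt_const y 1).fun_sub (hz.fun_pow 2))).fun_mul
    hu'').fun_add (((hz.const_mul (d - 3)).fun_sub ((hz.fun_pow 3).const_mul 2)).fun_mul
      hu')).fun_add ((hu.const_mul (d - 2)).fun_mul ((hasDerivAt_const y 1).fun_sub (hu.fun_pow 2)))
  have h0 := hF.unique ((hasDerivAt_const y 0).congr_of_eventuallyEq hode)
  push_cast at h0
  linear_combination h0

theorem hasDerivAt_cube_mul {f f' : ℝ → ℝ} {y : ℝ} (hf : HasDerivAt f (f' y) y) :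
    HasDerivAt (fun z => z ^ 3 * f z) (3 * y ^ 2 * f y + y ^ 3 * f' y) y :=
  ((hasDerivAt_pow 3 y).fun_mul hf).congr_deriv (by push_cast; ring)

theorem hasDerivAt_deriv_cube_mul {f f' f'' : ℝ → ℝ} {y : ℝ} (hf : HasDerivAt f (f' y) y)
    (hf' : HasDerivAt f' (f'' y) y) :
    HasDerivAt (fun z => 3 * z ^ 2 * f z + z ^ 3 * f' z)
      (6 * y * f y + 6 * y ^ 2 * f' y + y ^ 3 * f'' y) y :=
  ((((hasDerivAt_pow 2 y).const_mul 3).fun_mul hf).fun_add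
    ((hasDerivAt_pow 3 y).fun_mul hf')).congr_deriv (by push_cast; ring)

theorem one_sub_sq_pos_of_mem_Ioo {y : ℝ} (hy : y ∈ Ioo (0 : ℝ) 1) : 0 < 1 - y ^ 2 := by
  nlinarith [hy.1, hy.2]

-- Chosen so that `(P h')' = P (y²(1 - y²) h'' + p y h') / (y²(1 - y²))`.
noncomputable def integratingFactor (p y : ℝ) : ℝ := y ^ p * (1 - y ^ 2) ^ (-(p / 2))

theorem integratingFactor_pos {p y : ℝ} (hy : y ∈ Ioo (0 : ℝ) 1) : 0 < integratingFactor p y :=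
  mul_pos (Real.rpow_pos_of_pos hy.1 _) (Real.rpow_pos_of_pos (one_sub_sq_pos_of_mem_Ioo hy) _)

theorem hasDerivAt_integratingFactor {p y : ℝ} (hy : y ∈ Ioo (0 : ℝ) 1) :
    HasDerivAt (integratingFactor p) (p * integratingFactor p y / (y * (1 - y ^ 2))) y := by
  have h1y := one_sub_sq_pos_of_mem_Ioo hy
  have hfactor := (Real.hasDerivAt_rpow_const (p := -(p / 2)) (Or.inl h1y.ne')).comp y
    ((hasDerivAt_const y 1).fun_sub (hasDerivAt_pow 2 y))
  refine ((Real.hasDerivAt_rpow_const (p := p) (Or.inl hy.1.ne')).fun_mul hfactor).congr_deriv ?_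
  have hy0 := hy.1.ne'
  rw [Function.comp_apply, Real.rpow_sub hy.1, Real.rpow_sub h1y, Real.rpow_one, Real.rpow_one,
    integratingFactor]
  field_simp
  ring

theorem antitoneOn_integratingFactor_mul {p b : ℝ} {q h' h'' : ℝ → ℝ} (hb : b ≤ 1)
    (hh' : ∀ y ∈ Ioo 0 b, HasDerivAt h' (h'' y) y)
    (hode : ∀ y ∈ Ioo 0 b, y ^ 2 * (1 - y ^ 2) * h'' y + p * y * h' y = q y)
    (hq : ∀ y ∈ Ioo 0 b, q y ≤ 0) :
    AntitoneOn (fun y => integratingFactor p y * h' y) (Ioo 0 b) := by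
  have hsub : Ioo 0 b ⊆ Ioo (0 : ℝ) 1 := Ioo_subset_Ioo_right hb
  have hderiv : ∀ y ∈ Ioo 0 b, HasDerivAt (fun y => integratingFactor p y * h' y)
      (integratingFactor p y * q y / (y ^ 2 * (1 - y ^ 2))) y := by
    intro y hy
    have h1y := one_sub_sq_pos_of_mem_Ioo (hsub hy)
    refine ((hasDerivAt_integratingFactor (hsub hy)).fun_mul (hh' y hy)).congr_deriv ?_
    have hy0 := (hsub hy).1.ne'
    rw [← hode y hy]
    field_simp
    ring
  refine antitoneOn_of_hasDerivWithinAt_nonpos (convex_Ioo 0 b)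
    (f' := fun y => integratingFactor p y * q y / (y ^ 2 * (1 - y ^ 2)))
    (fun y hy => (hderiv y hy).continuousAt.continuousWithinAt) ?_ ?_ <;> rw [interior_Ioo]
  · exact fun y hy => (hderiv y hy).hasDerivWithinAt
  · intro y hy
    have h1y := one_sub_sq_pos_of_mem_Ioo (hsub hy)
    exact div_nonpos_of_nonpos_of_nonneg
      (mul_nonpos_of_nonneg_of_nonpos (integratingFactor_pos (hsub hy)).le (hq y hy))
      (by positivity)

theorem deriv_nonpos_of_neg_of_antitoneOn_mul {b : ℝ} {w h h' : ℝ → ℝ}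
    (hh : ∀ y ∈ Ioo 0 b, HasDerivAt h (h' y) y) (hlim : Tendsto h (𝓝[>] 0) (𝓝 0))
    (hneg : ∀ y ∈ Ioo 0 b, h y < 0) (hw : ∀ y ∈ Ioo 0 b, 0 < w y)
    (hanti : AntitoneOn (fun y => w y * h' y) (Ioo 0 b)) :
    ∀ y ∈ Ioo 0 b, h' y ≤ 0 := by
  intro ξ hξ
  by_contra! hξpos
  have hsub : Ioc 0 ξ ⊆ Ioo 0 b := Ioc_subset_Ioo_right hξ.2
  have hpos : ∀ y ∈ Ioc 0 ξ, 0 < h' y := fun y hy =>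
    pos_of_mul_pos_right ((mul_pos (hw ξ hξ) hξpos).trans_le (hanti (hsub hy) hξ hy.2))
      (hw y (hsub hy)).le
  have hmono : MonotoneOn h (Ioc 0 ξ) := by
    refine monotoneOn_of_hasDerivWithinAt_nonneg (convex_Ioc 0 ξ) (f' := h')
      (fun y hy => (hh y (hsub hy)).continuousAt.continuousWithinAt) ?_ ?_ <;> rw [interior_Ioc]
    · exact fun y hy => (hh y (hsub (Ioo_subset_Ioc_self hy))).hasDerivWithinAt
    · exact fun y hy => (hpos y (Ioo_subset_Ioc_self hy)).le
  have hle : ∀ᶠ y in 𝓝[>] 0, h y ≤ h ξ := by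
    filter_upwards [Ioc_mem_nhdsGT hξ.1] with y hy
    exact hmono hy ⟨hξ.1, le_rfl⟩ hy.2
  exact (hneg ξ hξ).not_ge (le_of_tendsto hlim hle)

theorem exists_first_nonneg {h : ℝ → ℝ} {y₀ : ℝ} (hcont : ContinuousOn h (Ioc 0 y₀))
    (hneg : ∀ᶠ y in 𝓝[>] 0, h y < 0) (hy₀ : 0 < y₀) (hhy₀ : 0 ≤ h y₀) :
    ∃ y₁ ∈ Ioc 0 y₀, 0 ≤ h y₁ ∧ ∀ y ∈ Ioo 0 y₁, h y < 0 := by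
  obtain ⟨ε, hε : 0 < ε, hεneg⟩ := mem_nhdsGT_iff_exists_Ioo_subset.mp hneg
  have hεy₀ : ε ≤ y₀ := not_lt.mp fun hlt => (hεneg ⟨hy₀, hlt⟩).not_ge hhy₀
  have hIcc : Icc (ε / 2) y₀ ⊆ Ioc 0 y₀ := Icc_subset_Ioc (half_pos hε) le_rfl
  set Z := Icc (ε / 2) y₀ ∩ h ⁻¹' Ici 0
  have hZ : IsCompact Z := isCompact_Icc.of_isClosed_subset
    ((hcont.mono hIcc).preimage_isClosed_of_isClosed isClosed_Icc isClosed_Ici) inter_subset_left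
  obtain ⟨y₁, ⟨hy₁, hhy₁⟩, hleast⟩ := hZ.exists_isLeast ⟨y₀, ⟨by linarith, le_rfl⟩, hhy₀⟩
  refine ⟨y₁, hIcc hy₁, hhy₁, fun y hy => ?_⟩
  rcases lt_or_ge y ε with hyε | hyε
  · exact hεneg ⟨hy.1, hyε⟩
  · by_contra! hhy
    exact (hleast ⟨⟨by linarith, hy.2.le.trans hy₁.2⟩, hhy⟩).not_gt hy.2

theorem neg_of_linear_ode {p : ℝ} {c h h' h'' : ℝ → ℝ}
    (hh : ∀ y ∈ Ioo (0 : ℝ) 1, HasDerivAt h (h' y) y)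
    (hh' : ∀ y ∈ Ioo (0 : ℝ) 1, HasDerivAt h' (h'' y) y)
    (hode : ∀ y ∈ Ioo (0 : ℝ) 1, y ^ 2 * (1 - y ^ 2) * h'' y + p * y * h' y - c y * h y = 0)
    (hc : ∀ y ∈ Ioo (0 : ℝ) 1, 0 ≤ c y)
    (hlim : Tendsto h (𝓝[>] 0) (𝓝 0)) (hneg : ∀ᶠ y in 𝓝[>] 0, h y < 0) :
    ∀ y ∈ Ioo (0 : ℝ) 1, h y < 0 := by
  intro y₀ hy₀
  by_contra! hhy₀
  have hcont : ContinuousOn h (Ioc 0 y₀) := fun y hy =>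
    (hh y ⟨hy.1, hy.2.trans_lt hy₀.2⟩).continuousAt.continuousWithinAt
  obtain ⟨y₁, hy₁, hhy₁, hneg₁⟩ := exists_first_nonneg hcont hneg hy₀.1 hhy₀
  have hb : y₁ ≤ 1 := hy₁.2.trans hy₀.2.le
  have hsub : Ioo 0 y₁ ⊆ Ioo (0 : ℝ) 1 := Ioo_subset_Ioo_right hb
  have hanti := antitoneOn_integratingFactor_mul hb (fun y hy => hh' y (hsub hy))
    (fun y hy => sub_eq_zero.mp (hode y (hsub hy)))
    (fun y hy => mul_nonpos_of_nonneg_of_nonpos (hc y (hsub hy)) (hneg₁ y hy).le)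
  have hderiv := deriv_nonpos_of_neg_of_antitoneOn_mul (fun y hy => hh y (hsub hy)) hlim hneg₁
    (fun y hy => integratingFactor_pos (hsub hy)) hanti
  have hmono : AntitoneOn h (Ioc 0 y₁) := by
    refine antitoneOn_of_hasDerivWithinAt_nonpos (convex_Ioc 0 y₁) (f' := h')
      (hcont.mono (Ioc_subset_Ioc_right hy₁.2)) ?_ ?_ <;> rw [interior_Ioc]
    · exact fun y hy => (hh y (hsub hy)).hasDerivWithinAt
    · exact hderiv
  have hhalf : y₁ / 2 ∈ Ioo 0 y₁ := ⟨half_pos hy₁.1, half_lt_self hy₁.1⟩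
  exact (hneg₁ _ hhalf).not_ge
    (hhy₁.trans (hmono (Ioo_subset_Ioc_self hhalf) ⟨hy₁.1, le_rfl⟩ hhalf.2.le))

theorem stmt4_general (d : ℝ) (hd : d ≥ 10) (a : ℝ) (ha : a > 0) (u u' u'' u''' : ℝ → ℝ)
    (hu : ∀ y ∈ Set.Ioo (0 : ℝ) 1, HasDerivAt u (u' y) y)
    (hu' : ∀ y ∈ Set.Ioo (0 : ℝ) 1, HasDerivAt u' (u'' y) y)
    (hu'' : ∀ y ∈ Set.Ioo (0 : ℝ) 1, HasDerivAt u'' (u''' y) y)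
    (hode : ∀ y ∈ Set.Ioo (0 : ℝ) 1,
      y ^ 2 * (1 - y ^ 2) * u'' y + ((d - 3) * y - 2 * y ^ 3) * u' y
        + (d - 2) * u y * (1 - (u y) ^ 2) = 0)
    (hh : Tendsto (fun y => y ^ 3 * u' y / y ^ 4) (𝓝[>] 0) (𝓝 (-2 * a))) :
    ∀ y ∈ Set.Ioo (0 : ℝ) 1, u' y < 0 := by
  have hneg : ∀ᶠ y in 𝓝[>] 0, y ^ 3 * u' y < 0 := by
    filter_upwards [hh.eventually_lt_const (show -2 * a < 0 by linarith), self_mem_nhdsWithin]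
      with y hy hy0
    exact neg_of_div_neg_left hy (pow_pos hy0 4).le
  have hlim : Tendsto (fun y => y ^ 3 * u' y) (𝓝[>] 0) (𝓝 0) := by
    have h4 : Tendsto (fun y : ℝ => y ^ 4) (𝓝[>] 0) (𝓝 0) :=
      tendsto_nhdsWithin_of_tendsto_nhds (by simpa using (continuous_pow 4).tendsto (0 : ℝ))
    simpa using (hh.mul h4).congr' (eventually_nhdsWithin_of_forall fun y hy =>
      div_mul_cancel₀ _ (pow_pos (mem_Ioi.mp hy) 4).ne')
  have hcube := neg_of_linear_ode (p := d - 7) (c := fun y => 3 * (d - 2) * u y ^ 2 + (d - 10))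
    (fun y hy => hasDerivAt_cube_mul (hu' y hy))
    (fun y hy => hasDerivAt_deriv_cube_mul (hu' y hy) (hu'' y hy))
    (fun y hy => by
      have := yangMills_ode_deriv (hu y hy) (hu' y hy) (hu'' y hy)
        (eventually_of_mem (isOpen_Ioo.mem_nhds hy) hode)
      linear_combination y ^ 3 * this)
    (fun y _ => by nlinarith [sq_nonneg (u y)]) hlim hneg
  exact fun y hy => neg_of_mul_neg_right (hcube y hy) (pow_pos hy.1 3).le

theorem stmt4 (d : ℝ) (hd : d ≥ 10) (a : ℝ) (ha : a > 0) (u u' u'' u''' : ℝ → ℝ)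
    (hu : ∀ y ∈ Set.Ioo (0 : ℝ) 1, HasDerivAt u (u' y) y)
    (hu' : ∀ y ∈ Set.Ioo (0 : ℝ) 1, HasDerivAt u' (u'' y) y)
    (hu'' : ∀ y ∈ Set.Ioo (0 : ℝ) 1, HasDerivAt u'' (u''' y) y)
    (hode : ∀ y ∈ Set.Ioo (0 : ℝ) 1,
      y ^ 2 * (1 - y ^ 2) * u'' y + ((d - 3) * y - 2 * y ^ 3) * u' y
        + (d - 2) * u y * (1 - (u y) ^ 2) = 0)
    (hasymp : (fun y => u y - (1 - a * y ^ 2)) =O[𝓝[>] 0] fun y => y ^ 4)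
    (hh : Tendsto (fun y => y ^ 3 * u' y / y ^ 4) (𝓝[>] 0) (𝓝 (-2 * a))) :
    ∀ y ∈ Set.Ioo (0 : ℝ) 1, u' y < 0 :=
  stmt4_general d hd a ha u u' u'' u''' hu hu' hu'' hode hh
end

section
/- If h : (0,1) → ℝ is C² and satisfies y²(1−y²)h'' + (d−7)y h' − q(y) h = 0 on (0,1) with q(y) > 0 for all y, and h is negative and strictly decreasing on some interval (0,ε), then h is negative and strictly decreasing on all of (0,1). -/
/-!
At a first critical point `y₀` of `h` with `h y₀ < 0`, the equation gives
`y₀²(1 - y₀²) h''(y₀) = q(y₀) h(y₀) < 0`, so `h'` is strictly decreasing through `y₀`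
and hence positive just to the left of `y₀`. This contradicts `h' ≤ 0` on `(0, y₀)`,
so `h'` can never reach `0`, and `h` stays strictly decreasing and negative.
-/

open Set Filter Topology

theorem HasDerivAt.eventually_nhdsLT_lt_of_neg {g : ℝ → ℝ} {c x : ℝ} (hg : HasDerivAt g c x)
    (hc : c < 0) : ∀ᶠ z in 𝓝[<] x, g x < g z := by
  filter_upwards [hg.hasDerivWithinAt.limsup_slope_le' (lt_irrefl x) hc, self_mem_nhdsWithin]
    with z hslope hzx
  rwa [slope_comm, slope_neg_iff_of_le (le_of_lt hzx)] at hslope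

theorem strictAntiOn_of_hasDerivAt_neg {s : Set ℝ} (hs : Convex ℝ s) {f f' : ℝ → ℝ}
    (hf : ∀ x ∈ s, HasDerivAt f (f' x) x) (hf' : ∀ x ∈ interior s, f' x < 0) :
    StrictAntiOn f s :=
  strictAntiOn_of_hasDerivWithinAt_neg hs
    (fun x hx => (hf x hx).continuousAt.continuousWithinAt)
    (fun x hx => (hf x (interior_subset hx)).hasDerivWithinAt) hf'

theorem neg_of_antitoneOn_Ioc {f : ℝ → ℝ} {a b ε : ℝ} (hε : a < ε) (hab : a < b)
    (hf : AntitoneOn f (Ioc a b)) (hneg : ∀ y ∈ Ioo a ε, f y < 0) : f b < 0 := by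
  obtain ⟨c, hac, hcε, hcb⟩ : ∃ c, a < c ∧ c < ε ∧ c < b := by
    simpa only [lt_min_iff] using exists_between (lt_min hε hab)
  calc f b ≤ f c := hf ⟨hac, hcb.le⟩ ⟨hab, le_rfl⟩ hcb.le
    _ < 0 := hneg c ⟨hac, hcε⟩

theorem forall_neg_of_forall_neg_left {g : ℝ → ℝ} {a b ε : ℝ} (hε : a < ε)
    (hg : ContinuousOn g (Ioo a b)) (hinit : ∀ y ∈ Ioo a ε, g y < 0)
    (hstep : ∀ x ∈ Ioo a b, (∀ y ∈ Ioo a x, g y < 0) → g x < 0) :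
    ∀ y ∈ Ioo a b, g y < 0 := by
  intro y hy
  by_contra! hy0
  obtain ⟨c, hac, hcε, hcy⟩ : ∃ c, a < c ∧ c < ε ∧ c < y := by
    simpa only [lt_min_iff] using exists_between (lt_min hε hy.1)
  have hclosed : IsClosed (Icc c y ∩ g ⁻¹' Ici 0) :=
    (hg.mono (Icc_subset_Ioo hac hy.2)).preimage_isClosed_of_isClosed isClosed_Icc isClosed_Ici
  obtain ⟨x, hx, hxmin⟩ :=
    (isCompact_Icc.of_isClosed_subset hclosed inter_subset_left).exists_isLeast
      ⟨y, ⟨hcy.le, le_rfl⟩, hy0⟩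
  refine (not_lt.mpr hx.2) (hstep x ⟨hac.trans_le hx.1.1, hx.1.2.trans_lt hy.2⟩ fun z hz => ?_)
  by_cases hzc : z < c
  · exact hinit z ⟨hz.1, hzc.trans hcε⟩
  · by_contra! hz0
    exact (hxmin ⟨⟨not_lt.mp hzc, hz.2.le.trans hx.1.2⟩, hz0⟩).not_gt hz.2

section Equation

variable {d : ℝ} {h h' h'' q : ℝ → ℝ} {y : ℝ}

theorem second_deriv_neg_of_deriv_eq_zero (hy : y ∈ Ioo (0 : ℝ) 1) (hq : 0 < q y)
    (hode : y ^ 2 * (1 - y ^ 2) * h'' y + (d - 7) * y * h' y - q y * h y = 0)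
    (hneg : h y < 0) (hcrit : h' y = 0) : h'' y < 0 := by
  have hcoef : 0 < y ^ 2 * (1 - y ^ 2) := by
    have : y ^ 2 < 1 := by nlinarith [hy.1, hy.2]
    exact mul_pos (pow_pos hy.1 2) (sub_pos.mpr this)
  rw [hcrit, mul_zero, add_zero, sub_eq_zero] at hode
  have : y ^ 2 * (1 - y ^ 2) * h'' y < 0 := hode ▸ mul_neg_of_pos_of_neg hq hneg
  exact neg_of_mul_neg_right this hcoef.le

theorem deriv_neg_of_deriv_nonpos_left (hh' : HasDerivAt h' (h'' y) y) (hy : y ∈ Ioo (0 : ℝ) 1)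
    (hq : 0 < q y) (hode : y ^ 2 * (1 - y ^ 2) * h'' y + (d - 7) * y * h' y - q y * h y = 0)
    (hneg : h y < 0) (hleft : ∀ z ∈ Ioo 0 y, h' z ≤ 0) : h' y < 0 := by
  have hle : h' y ≤ 0 :=
    le_of_tendsto (hh'.continuousAt.tendsto.mono_left nhdsWithin_le_nhds)
      (eventually_of_mem (Ioo_mem_nhdsLT hy.1) hleft)
  refine hle.lt_of_ne fun hcrit => ?_
  have hrise := hh'.eventually_nhdsLT_lt_of_neg
    (second_deriv_neg_of_deriv_eq_zero hy hq hode hneg hcrit)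
  obtain ⟨z, hz, hzy⟩ := (hrise.and (Ioo_mem_nhdsLT hy.1)).exists
  linarith [hleft z hzy]

end Equation

theorem stmt5 (d : ℝ) (h h' h'' q : ℝ → ℝ)
    (hh : ∀ y ∈ Set.Ioo (0 : ℝ) 1, HasDerivAt h (h' y) y)
    (hh' : ∀ y ∈ Set.Ioo (0 : ℝ) 1, HasDerivAt h' (h'' y) y)
    (hq : ∀ y ∈ Set.Ioo (0 : ℝ) 1, q y > 0)
    (hode : ∀ y ∈ Set.Ioo (0 : ℝ) 1,
      y ^ 2 * (1 - y ^ 2) * h'' y + (d - 7) * y * h' y - q y * h y = 0)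
    (hinit : ∃ ε > 0, ε ≤ 1 ∧ (∀ y ∈ Set.Ioo (0 : ℝ) ε, h y < 0) ∧
      StrictAntiOn h (Set.Ioo 0 ε)) :
    (∀ y ∈ Set.Ioo (0 : ℝ) 1, h y < 0) ∧ StrictAntiOn h (Set.Ioo (0 : ℝ) 1) := by
  obtain ⟨ε, hε, hε1, hneg, hanti⟩ := hinit
  have hcrit :
      ∀ y ∈ Ioo (0 : ℝ) 1, h y < 0 → (∀ z ∈ Ioo 0 y, h' z ≤ 0) → h' y < 0 :=
    fun y hy => deriv_neg_of_deriv_nonpos_left (hh' y hy) hy (hq y hy) (hode y hy)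
  have hderiv_init : ∀ y ∈ Ioo 0 ε, h' y ≤ 0 := fun y hy => by
    rw [← (hh y ⟨hy.1, hy.2.trans_le hε1⟩).deriv, ← derivWithin_of_isOpen isOpen_Ioo hy]
    exact hanti.antitoneOn.derivWithin_nonpos
  have hstep : ∀ x ∈ Ioo (0 : ℝ) 1, (∀ z ∈ Ioo 0 x, h' z < 0) → h' x < 0 := by
    intro x hx hleft
    have hanti_x : StrictAntiOn h (Ioc 0 x) :=
      strictAntiOn_of_hasDerivAt_neg (convex_Ioc 0 x)
        (fun z hz => hh z ⟨hz.1, hz.2.trans_lt hx.2⟩) (by rwa [interior_Ioc])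
    exact hcrit x hx (neg_of_antitoneOn_Ioc hε hx.1 hanti_x.antitoneOn hneg)
      fun z hz => (hleft z hz).le
  have hderiv : ∀ y ∈ Ioo (0 : ℝ) 1, h' y < 0 :=
    forall_neg_of_forall_neg_left hε (fun y hy => (hh' y hy).continuousAt.continuousWithinAt)
      (fun y hy => hcrit y ⟨hy.1, hy.2.trans_le hε1⟩ (hneg y hy)
        fun z hz => hderiv_init z ⟨hz.1, hz.2.trans hy.2⟩)
      hstep
  have hanti' : StrictAntiOn h (Ioo (0 : ℝ) 1) :=
    strictAntiOn_of_hasDerivAt_neg (convex_Ioo 0 1) hh (by rwa [interior_Ioo])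
  exact ⟨fun y hy => neg_of_antitoneOn_Ioc hε hy.1
    (hanti'.antitoneOn.mono (Ioc_subset_Ioo_right hy.2)) hneg, hanti'⟩
end
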